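/- (i) If 𝓝 is a normalized family and the independent family J(𝓝)* has an element of its universe belonging to at least half of its sets, then there exists I ∈ J(𝓝) with |I| ≥ |𝓝|/2. (ii) If 𝓕 is an independent union-closed family and its dual 𝓕* contains an irreducible set I ∈ J(𝓕*) with |I| ≥ |𝓕*|/2, then there exists an element of U(𝓕) belonging to at least |𝓕|/2 of the sets of 𝓕. -/
import Mathlib


/-- The universe `U(𝓕)` of a finite family of finite sets: the union of its members. -/
def famUniv (F : Finset (Finset ℕ)) : Finset ℕ := F.sup id

/-- `𝓕_a = {F ∈ 𝓕 : a ∈ F}`. -/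
def famAt (F : Finset (Finset ℕ)) (a : ℕ) : Finset (Finset ℕ) := F.filter (fun X => a ∈ X)

/-- `𝓕` is union-closed. -/
def unionClosed (F : Finset (Finset ℕ)) : Prop := ∀ A ∈ F, ∀ B ∈ F, A ∪ B ∈ F

/-- `𝓕` is separating if `𝓕_a ≠ 𝓕_b` for all distinct `a, b ∈ U(𝓕)`. -/
def separating (F : Finset (Finset ℕ)) : Prop :=
  ∀ a ∈ famUniv F, ∀ b ∈ famUniv F, a ≠ b → famAt F a ≠ famAt F b

/-- `𝓕` is normalized: separating, union-closed, `∅ ∈ 𝓕` and `|𝓕| = |U(𝓕)| + 1`. -/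
def normalized (F : Finset (Finset ℕ)) : Prop :=
  separating F ∧ unionClosed F ∧ ∅ ∈ F ∧ F.card = (famUniv F).card + 1

/-- `𝓕` is independent. -/
def independent (F : Finset (Finset ℕ)) : Prop :=
  ∀ a ∈ famUniv F, ∀ S ⊆ famUniv F \ {a},
    (∃ O ∈ F, a ∉ O ∧ (O ∩ S).Nonempty) ∨ (∃ O ∈ F, a ∈ O ∧ O ∩ S = ∅)

/-- `𝓖` is a generating subfamily of `𝓕`: `𝓖 ⊆ 𝓕` and every member of `𝓕` is a union
of members of `𝓖` (the empty union giving `∅`). -/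
def generates (G F : Finset (Finset ℕ)) : Prop :=
  G ⊆ F ∧ ∀ X ∈ F, ∃ T ⊆ G, X = T.sup id

/-- The union-closed family generated by `𝓖`: all unions of subfamilies of `𝓖`
(including the empty union `∅`). -/
def gen (G : Finset (Finset ℕ)) : Finset (Finset ℕ) :=
  G.powerset.image (fun T => T.sup id)

/-- `J(𝓕)`: the non-empty irreducible members of `𝓕`. -/
def J (F : Finset (Finset ℕ)) : Finset (Finset ℕ) :=
  F.filter (fun I => I ≠ ∅ ∧ ∀ A ∈ F, ∀ B ∈ F, I = A ∪ B → A = I ∨ B = I)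

/-- `H : ℕ → Finset ℕ` is an indexing `H_1, …, H_s` of `𝓛 \ {∅}`. -/
def isIndexing (L : Finset (Finset ℕ)) (s : ℕ) (H : ℕ → Finset ℕ) : Prop :=
  Set.InjOn H (Finset.Icc 1 s) ∧ (Finset.Icc 1 s).image H = L.erase ∅

/-- `𝓗^{ι_j} = {i ∈ [s] : j ∈ H_i}`. -/
def iota (s : ℕ) (H : ℕ → Finset ℕ) (j : ℕ) : Finset ℕ :=
  (Finset.Icc 1 s).filter (fun i => j ∈ H i)

/-- The dual family: the union-closed family (containing `∅`) generated by
`{𝓗^{ι_1}, …, 𝓗^{ι_m}}`, where `H` indexes `𝓛 \ {∅}` as `H_1, …, H_s` and `U(𝓛) = [m]`. -/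
def dualFam (m s : ℕ) (H : ℕ → Finset ℕ) : Finset (Finset ℕ) :=
  gen ((Finset.Icc 1 m).image (iota s H))


open Finset

lemma sup_image_iota (s : ℕ) (H : ℕ → Finset ℕ) (T : Finset ℕ) :
    (T.image (iota s H)).sup id = (Finset.Icc 1 s).filter (fun i => ∃ j ∈ T, j ∈ H i) := by
  ext i
  simp only [Finset.mem_sup, Finset.mem_image, Finset.mem_filter, iota, id]
  aesop

lemma mem_gen {G : Finset (Finset ℕ)} {A : Finset ℕ} :
    A ∈ gen G ↔ ∃ T ⊆ G, A = T.sup id := by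
  simp [gen, eq_comm]

lemma mem_dualFam {m s : ℕ} {H : ℕ → Finset ℕ} {A : Finset ℕ} :
    A ∈ dualFam m s H ↔ ∃ T ⊆ Finset.Icc 1 m,
      A = (Finset.Icc 1 s).filter (fun i => ∃ j ∈ T, j ∈ H i) := by
  rw [dualFam, mem_gen]
  constructor
  · rintro ⟨T', hT', rfl⟩
    refine ⟨(Finset.Icc 1 m).filter (fun j => iota s H j ∈ T'), Finset.filter_subset _ _, ?_⟩
    rw [← sup_image_iota]
    congr 1
    apply Finset.Subset.antisymm
    · intro g hg
      have := hT' hg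
      simp only [Finset.mem_image] at this ⊢
      obtain ⟨j, hj, rfl⟩ := this
      exact ⟨j, by simp [hj, hg], rfl⟩
    · intro g hg
      simp only [Finset.mem_image, Finset.mem_filter] at hg
      obtain ⟨j, ⟨_, hj2⟩, rfl⟩ := hg
      exact hj2
  · rintro ⟨T, hT, rfl⟩
    exact ⟨T.image (iota s H), Finset.image_subset_image hT, (sup_image_iota s H T).symm⟩

lemma sup_mem_of_unionClosed {F : Finset (Finset ℕ)} (hF : unionClosed F) :
    ∀ S : Finset (Finset ℕ), S ⊆ F → S.Nonempty → S.sup id ∈ F := by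
  intro S
  induction S using Finset.induction_on with
  | empty => intro _ h; simp at h
  | @insert A S hA ih =>
    intro hsub _
    rcases S.eq_empty_or_nonempty with rfl | hne
    · simpa using hsub (Finset.mem_insert_self A ∅)
    · have h1 : A ∈ F := hsub (Finset.mem_insert_self A S)
      have h2 : S.sup id ∈ F := ih (fun x hx => hsub (Finset.mem_insert_of_mem hx)) hne
      rw [Finset.sup_insert]
      exact hF A h1 _ h2

lemma mem_famUniv {F : Finset (Finset ℕ)} {j : ℕ} : j ∈ famUniv F ↔ ∃ X ∈ F, j ∈ X := by
  simp [famUniv, Finset.mem_sup]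


lemma eq_sup_J {F : Finset (Finset ℕ)} (hF : unionClosed F) :
    ∀ X, X ∈ F → X = ((J F).filter (fun I => I ⊆ X)).sup id := by
  intro X
  induction X using Finset.strongInduction with
  | _ X ih =>
    intro hX
    have hsub : ∀ j ∈ ((J F).filter (fun I => I ⊆ X)).sup id, j ∈ X := by
      intro j hj
      rw [Finset.mem_sup] at hj
      obtain ⟨I, hI, hjI⟩ := hj
      exact (Finset.mem_filter.mp hI).2 hjI
    refine Finset.Subset.antisymm ?_ hsub
    intro j hj
    rw [Finset.mem_sup]
    by_cases hirr : X ∈ J F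
    · exact ⟨X, Finset.mem_filter.mpr ⟨hirr, Finset.Subset.refl X⟩, hj⟩
    · have hX0 : X ≠ ∅ := by
        intro h
        rw [h] at hj
        exact absurd hj (Finset.notMem_empty j)
      have hne : ∃ A ∈ F, ∃ B ∈ F, X = A ∪ B ∧ ¬(A = X) ∧ ¬(B = X) := by
        by_contra hcon
        push_neg at hcon
        exact hirr (Finset.mem_filter.mpr ⟨hX, hX0, fun A hA B hB hAB => by
          by_contra hc
          push_neg at hc
          exact hc.2 (hcon A hA B hB hAB hc.1)⟩)
      obtain ⟨A, hA, B, hB, hXAB, hAne, hBne⟩ := hne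
      have hAX : A ⊂ X := by
        refine Finset.ssubset_iff_subset_ne.mpr ⟨?_, hAne⟩
        rw [hXAB]; exact Finset.subset_union_left
      have hBX : B ⊂ X := by
        refine Finset.ssubset_iff_subset_ne.mpr ⟨?_, hBne⟩
        rw [hXAB]; exact Finset.subset_union_right
      have key : ∀ C : Finset ℕ, C ⊂ X → C ∈ F → j ∈ C →
          ∃ I ∈ (J F).filter (fun I => I ⊆ X), j ∈ id I := by
        intro C hCX hCF hjC
        have h1 := ih C hCX hCF
        rw [h1, Finset.mem_sup] at hjC
        obtain ⟨I, hI, hjI⟩ := hjC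
        obtain ⟨hIJ, hIC⟩ := Finset.mem_filter.mp hI
        exact ⟨I, Finset.mem_filter.mpr ⟨hIJ, hIC.trans hCX.subset⟩, hjI⟩
      rw [hXAB] at hj
      rcases Finset.mem_union.mp hj with h | h
      · exact key A hAX hA h
      · exact key B hBX hB h

lemma card_ge_of_separating {F : Finset (Finset ℕ)} (hsep : separating F)
    (huc : unionClosed F) (hempty : ∅ ∈ F) : (famUniv F).card + 1 ≤ F.card := by
  classical
  set U := famUniv F with hU
  set g : ℕ → Finset ℕ := fun a => (F.filter (fun X => a ∉ X)).sup id with hg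
  have hgF : ∀ a, g a ∈ F := by
    intro a
    apply sup_mem_of_unionClosed huc _ (Finset.filter_subset _ _)
    exact ⟨∅, Finset.mem_filter.mpr ⟨hempty, by simp⟩⟩
  have hag : ∀ a, a ∉ g a := by
    intro a ha
    rw [hg] at ha
    simp only [Finset.mem_sup, Finset.mem_filter, id] at ha
    obtain ⟨X, ⟨_, hX⟩, haX⟩ := ha
    exact hX haX
  have hUF : U ∈ F := by
    rcases F.eq_empty_or_nonempty with h | h
    · simp [h] at hempty
    · exact sup_mem_of_unionClosed huc F (Finset.Subset.refl F) h
  have hinj : Set.InjOn g U := by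
    intro a ha b hb hab
    by_contra hne
    apply hsep a ha b hb hne
    apply Finset.filter_congr
    intro X hX
    constructor
    · intro haX
      by_contra hbX
      have : X ⊆ g b := Finset.le_sup (f := id) (Finset.mem_filter.mpr ⟨hX, hbX⟩)
      rw [← hab] at this
      exact hag a (this haX)
    · intro hbX
      by_contra haX
      have : X ⊆ g a := Finset.le_sup (f := id) (Finset.mem_filter.mpr ⟨hX, haX⟩)
      rw [hab] at this
      exact hag b (this hbX)
  have hsubset : insert U (U.image g) ⊆ F := by
    intro X hX
    rcases Finset.mem_insert.mp hX with rfl | hX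
    · exact hUF
    · obtain ⟨a, _, rfl⟩ := Finset.mem_image.mp hX
      exact hgF a
  have hUnotmem : U ∉ U.image g := by
    intro h
    obtain ⟨a, ha, hga⟩ := Finset.mem_image.mp h
    apply hag a
    rw [hga]
    exact ha
  calc U.card + 1 = (insert U (U.image g)).card := by
        rw [Finset.card_insert_of_notMem hUnotmem, Finset.card_image_of_injOn hinj]
      _ ≤ F.card := Finset.card_le_card hsubset

lemma J_gen_mem {G : Finset (Finset ℕ)} {I : Finset ℕ} (hI : I ∈ J (gen G)) :
    ∃ g ∈ G, I = g := by
  classical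
  obtain ⟨hIgen, hIne, hirr⟩ : I ∈ gen G ∧ I ≠ ∅ ∧
      ∀ A ∈ gen G, ∀ B ∈ gen G, I = A ∪ B → A = I ∨ B = I := by
    have := Finset.mem_filter.mp hI
    exact ⟨this.1, this.2.1, this.2.2⟩
  obtain ⟨T, hT, hIT⟩ := mem_gen.mp hIgen
  suffices h : ∀ T : Finset (Finset ℕ), T ⊆ G → I = T.sup id → ∃ g ∈ T, g = I by
    obtain ⟨g, hg, hgI⟩ := h T hT hIT
    exact ⟨g, hT hg, hgI.symm⟩
  intro T
  induction T using Finset.induction_on with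
  | empty => intro _ h; simp at h; exact absurd h hIne
  | @insert A T hA ih =>
    intro hsub hI'
    rw [Finset.sup_insert] at hI'
    have hAgen : A ∈ gen G := mem_gen.mpr ⟨{A}, by
      simp [Finset.singleton_subset_iff.mpr (hsub (Finset.mem_insert_self A T))], by simp⟩
    have hTgen : T.sup id ∈ gen G :=
      mem_gen.mpr ⟨T, fun x hx => hsub (Finset.mem_insert_of_mem hx), rfl⟩
    rcases hirr A hAgen (T.sup id) hTgen hI' with h | h
    · exact ⟨A, Finset.mem_insert_self A T, h⟩
    · obtain ⟨g, hg, hgI⟩ := ih (fun x hx => hsub (Finset.mem_insert_of_mem hx)) h.symm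
      exact ⟨g, Finset.mem_insert_of_mem hg, hgI⟩

lemma separating_image_sdiff {N : Finset (Finset ℕ)} (hsep : separating N)
    (huc : unionClosed N) {K : Finset ℕ} (hK : K ∈ N) :
    separating ((N.filter (fun X => K ⊆ X)).image (fun X => X \ K)) := by
  classical
  intro x hx y hy hxy hfa
  obtain ⟨A, hA, hxA⟩ := mem_famUniv.mp hx
  obtain ⟨B, hB, hyB⟩ := mem_famUniv.mp hy
  obtain ⟨XA, hXA, rfl⟩ := Finset.mem_image.mp hA
  obtain ⟨XB, hXB, rfl⟩ := Finset.mem_image.mp hB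
  have hxK : x ∉ K := (Finset.mem_sdiff.mp hxA).2
  have hyK : y ∉ K := (Finset.mem_sdiff.mp hyB).2
  have hx' : x ∈ famUniv N :=
    mem_famUniv.mpr ⟨XA, Finset.mem_of_mem_filter _ hXA, (Finset.mem_sdiff.mp hxA).1⟩
  have hy' : y ∈ famUniv N :=
    mem_famUniv.mpr ⟨XB, Finset.mem_of_mem_filter _ hXB, (Finset.mem_sdiff.mp hyB).1⟩
  apply hsep x hx' y hy' hxy
  apply Finset.filter_congr
  intro X hX
  have hZ : (X ∪ K) \ K ∈ (N.filter (fun X => K ⊆ X)).image (fun X => X \ K) :=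
    Finset.mem_image_of_mem _
      (Finset.mem_filter.mpr ⟨huc X hX K hK, Finset.subset_union_right⟩)
  have hxZ : x ∈ (X ∪ K) \ K ↔ x ∈ X := by
    rw [Finset.mem_sdiff, Finset.mem_union]
    constructor
    · rintro ⟨h | h, _⟩
      · exact h
      · exact absurd h hxK
    · intro h
      exact ⟨Or.inl h, hxK⟩
  have hyZ : y ∈ (X ∪ K) \ K ↔ y ∈ X := by
    rw [Finset.mem_sdiff, Finset.mem_union]
    constructor
    · rintro ⟨h | h, _⟩
      · exact h
      · exact absurd h hyK
    · intro h
      exact ⟨Or.inl h, hyK⟩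
  constructor
  · intro hxX
    have h1 : (X ∪ K) \ K ∈ famAt ((N.filter (fun X => K ⊆ X)).image (fun X => X \ K)) x :=
      Finset.mem_filter.mpr ⟨hZ, hxZ.mpr hxX⟩
    rw [hfa] at h1
    exact hyZ.mp (Finset.mem_filter.mp h1).2
  · intro hyX
    have h1 : (X ∪ K) \ K ∈ famAt ((N.filter (fun X => K ⊆ X)).image (fun X => X \ K)) y :=
      Finset.mem_filter.mpr ⟨hZ, hyZ.mpr hyX⟩
    rw [← hfa] at h1
    exact hxZ.mp (Finset.mem_filter.mp h1).2

set_option maxHeartbeats 1000000 in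
lemma part_i (n s : ℕ) (N : Finset (Finset ℕ)) (H : ℕ → Finset ℕ)
    (hN : normalized N) (hU : famUniv N = Finset.Icc 1 n) (hIdx : isIndexing (J N) s H)
    (hyp : ∃ a ∈ famUniv (dualFam n s H),
      (dualFam n s H).card ≤ 2 * (famAt (dualFam n s H) a).card) :
    ∃ I ∈ J N, N.card ≤ 2 * I.card := by
  classical
  obtain ⟨hsep, huc, hemp, hcard⟩ := hN
  obtain ⟨hinj, himg⟩ := hIdx
  obtain ⟨a, haU, hle⟩ := hyp
  have hNcard : N.card = n + 1 := by
    rw [hcard, hU, Nat.card_Icc]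
    omega
  have himg' : (Finset.Icc 1 s).image H = J N := by
    rw [himg]
    apply Finset.erase_eq_of_notMem
    intro h
    exact (Finset.mem_filter.mp h).2.1 rfl
  have hHJ : ∀ i ∈ Finset.Icc 1 s, H i ∈ J N := by
    intro i hi
    rw [← himg']
    exact Finset.mem_image_of_mem H hi
  have hHN : ∀ i ∈ Finset.Icc 1 s, H i ∈ N := fun i hi =>
    Finset.mem_of_mem_filter _ (hHJ i hi)
  have hsubU : ∀ X ∈ N, X ⊆ Finset.Icc 1 n := by
    intro X hX j hj
    rw [← hU]
    exact mem_famUniv.mpr ⟨X, hX, hj⟩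
  set e : Finset ℕ → Finset ℕ :=
    fun X => (Finset.Icc 1 s).filter (fun i => ¬ H i ⊆ X) with he
  -- Step A : e maps N into the dual family
  have heD : ∀ X ∈ N, e X ∈ dualFam n s H := by
    intro X hX
    rw [mem_dualFam]
    refine ⟨Finset.Icc 1 n \ X, Finset.sdiff_subset, ?_⟩
    apply Finset.filter_congr
    intro i hi
    constructor
    · intro hns
      obtain ⟨j, hjH, hjX⟩ := Finset.not_subset.mp hns
      exact ⟨j, Finset.mem_sdiff.mpr ⟨hsubU _ (hHN i hi) hjH, hjX⟩, hjH⟩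
    · rintro ⟨j, hj, hjH⟩ hsub
      exact (Finset.mem_sdiff.mp hj).2 (hsub hjH)
  -- Step B : e is surjective onto the dual family
  have hsurj : ∀ A ∈ dualFam n s H, ∃ X ∈ N, e X = A := by
    intro A hA
    obtain ⟨T, hT, rfl⟩ := mem_dualFam.mp hA
    set X : Finset ℕ := (N.filter (fun Y => Y ∩ T = ∅)).sup id with hXdef
    have hXN : X ∈ N := by
      apply sup_mem_of_unionClosed huc _ (Finset.filter_subset _ _)
      exact ⟨∅, Finset.mem_filter.mpr ⟨hemp, Finset.empty_inter T⟩⟩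
    have hXT : ∀ j ∈ X, j ∉ T := by
      intro j hj hjT
      rw [hXdef, Finset.mem_sup] at hj
      obtain ⟨Y, hY, hjY⟩ := hj
      have := (Finset.mem_filter.mp hY).2
      have : j ∈ Y ∩ T := Finset.mem_inter.mpr ⟨hjY, hjT⟩
      rw [(Finset.mem_filter.mp hY).2] at this
      exact absurd this (Finset.notMem_empty j)
    refine ⟨X, hXN, ?_⟩
    apply Finset.filter_congr
    intro i hi
    constructor
    · intro hns
      by_contra hcon
      push_neg at hcon
      have hHiT : H i ∩ T = ∅ := by
        apply Finset.eq_empty_of_forall_notMem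
        intro j hj
        rw [Finset.mem_inter] at hj
        exact hcon j hj.2 hj.1
      apply hns
      intro j hj
      rw [hXdef, Finset.mem_sup]
      exact ⟨H i, Finset.mem_filter.mpr ⟨hHN i hi, hHiT⟩, hj⟩
    · rintro ⟨j, hjT, hjH⟩ hsub
      exact hXT j (hsub hjH) hjT
  -- Step C : e is injective on N
  have hinjE : Set.InjOn e N := by
    intro X hX Y hY hXY
    have hiff : ∀ i ∈ Finset.Icc 1 s, (H i ⊆ X ↔ H i ⊆ Y) := by
      intro i hi
      have h1 : i ∈ e X ↔ i ∈ e Y := by rw [hXY]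
      rw [he] at h1
      simp only [Finset.mem_filter, hi, true_and] at h1
      tauto
    have hfil : (J N).filter (fun I => I ⊆ X) = (J N).filter (fun I => I ⊆ Y) := by
      apply Finset.filter_congr
      intro I hI
      rw [← himg'] at hI
      obtain ⟨i, hi, rfl⟩ := Finset.mem_image.mp hI
      exact hiff i hi
    rw [eq_sup_J huc X hX, eq_sup_J huc Y hY, hfil]
  -- Step D : the dual family is the image of N under e
  have hD : dualFam n s H = N.image e := by
    apply Finset.Subset.antisymm
    · intro A hA
      obtain ⟨X, hX, hXA⟩ := hsurj A hA
      exact Finset.mem_image.mpr ⟨X, hX, hXA⟩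
    · intro A hA
      obtain ⟨X, hX, rfl⟩ := Finset.mem_image.mp hA
      exact heD X hX
  have hDcard : (dualFam n s H).card = n + 1 := by
    rw [hD, Finset.card_image_of_injOn hinjE, hNcard]
  -- Step E : a is an index in [s]
  have has : a ∈ Finset.Icc 1 s := by
    obtain ⟨A, hA, haA⟩ := mem_famUniv.mp haU
    obtain ⟨T, hT, rfl⟩ := mem_dualFam.mp hA
    exact (Finset.mem_filter.mp haA).1
  -- Step F : the card of famAt
  have hfamAt : (famAt (dualFam n s H) a).card = (N.filter (fun X => ¬ H a ⊆ X)).card := by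
    rw [famAt, hD, Finset.filter_image]
    rw [Finset.card_image_of_injOn (hinjE.mono (by
      intro X hX
      exact Finset.mem_of_mem_filter _ hX))]
    congr 1
    apply Finset.filter_congr
    intro X hX
    rw [he]
    simp only [Finset.mem_filter, has, true_and]
  -- Step G : arithmetic setup
  set c : ℕ := (N.filter (fun X => H a ⊆ X)).card with hc
  have hsplit : c + (N.filter (fun X => ¬ H a ⊆ X)).card = N.card :=
    Finset.card_filter_add_card_filter_not _
  -- Step H : the up-set bound  c ≥ n + 1 - |H a|
  have hHa : H a ∈ N := hHN a has
  have hHaU : H a ⊆ Finset.Icc 1 n := hsubU _ hHa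
  set M : Finset (Finset ℕ) := (N.filter (fun X => H a ⊆ X)).image (fun X => X \ H a) with hM
  have hMinj : Set.InjOn (fun X => X \ H a) (N.filter (fun X => H a ⊆ X)) := by
    intro X hX Y hY hXY
    simp only [Finset.coe_filter, Set.mem_setOf_eq] at hX hY
    simp only at hXY
    rw [← Finset.sdiff_union_of_subset hX.2, ← Finset.sdiff_union_of_subset hY.2, hXY]
  have hMcard : M.card = c := by
    rw [hM, Finset.card_image_of_injOn hMinj]
  have hMuniv : famUniv M = Finset.Icc 1 n \ H a := by
    apply Finset.Subset.antisymm
    · intro j hj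
      obtain ⟨A, hA, hjA⟩ := mem_famUniv.mp hj
      obtain ⟨X, hX, rfl⟩ := Finset.mem_image.mp hA
      have hXN := Finset.mem_of_mem_filter _ hX
      rw [Finset.mem_sdiff] at hjA ⊢
      exact ⟨hsubU _ hXN hjA.1, hjA.2⟩
    · intro j hj
      apply mem_famUniv.mpr
      refine ⟨Finset.Icc 1 n \ H a, ?_, hj⟩
      apply Finset.mem_image.mpr
      refine ⟨Finset.Icc 1 n, Finset.mem_filter.mpr ⟨?_, hHaU⟩, rfl⟩
      rw [← hU]
      apply sup_mem_of_unionClosed huc _ (Finset.Subset.refl N) ⟨∅, hemp⟩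
  have hMuc : unionClosed M := by
    intro A hA B hB
    obtain ⟨X, hX, rfl⟩ := Finset.mem_image.mp hA
    obtain ⟨Y, hY, rfl⟩ := Finset.mem_image.mp hB
    rw [← Finset.union_sdiff_distrib]
    apply Finset.mem_image_of_mem
    rw [Finset.mem_filter] at hX hY ⊢
    exact ⟨huc X hX.1 Y hY.1, hX.2.trans Finset.subset_union_left⟩
  have hMemp : ∅ ∈ M := by
    apply Finset.mem_image.mpr
    exact ⟨H a, Finset.mem_filter.mpr ⟨hHa, Finset.Subset.refl _⟩, Finset.sdiff_self (H a)⟩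
  have hMsep : separating M := separating_image_sdiff hsep huc hHa
  have hMbound : (famUniv M).card + 1 ≤ M.card := card_ge_of_separating hMsep hMuc hMemp
  have hMucard : (famUniv M).card = n - (H a).card := by
    rw [hMuniv, Finset.card_sdiff_of_subset hHaU, Nat.card_Icc]
    omega
  -- Step I : conclude
  have hHan : (H a).card ≤ n := (Finset.card_le_card hHaU).trans (by rw [Nat.card_Icc]; omega)
  refine ⟨H a, hHJ a has, ?_⟩
  rw [hfamAt] at hle
  rw [hDcard] at hle
  omega

set_option maxHeartbeats 1000000 in
lemma part_ii (m t : ℕ) (F : Finset (Finset ℕ)) (HF : ℕ → Finset ℕ)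
    (hind : independent F) (huc : unionClosed F) (hU : famUniv F = Finset.Icc 1 m)
    (hIdx : isIndexing F t HF)
    (hyp : ∃ I ∈ J (dualFam m t HF), (dualFam m t HF).card ≤ 2 * I.card) :
    ∃ a ∈ famUniv F, F.card ≤ 2 * (famAt F a).card := by
  classical
  obtain ⟨hinj, himg⟩ := hIdx
  obtain ⟨I, hI, hle⟩ := hyp
  -- Step 1 : I is one of the generators
  unfold dualFam at hI
  obtain ⟨g, hg, rfl⟩ := J_gen_mem hI
  obtain ⟨a, ham, rfl⟩ := Finset.mem_image.mp hg
  -- basic facts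
  have hHFF : ∀ i ∈ Finset.Icc 1 t, HF i ∈ F := by
    intro i hi
    have : HF i ∈ F.erase ∅ := by
      rw [← himg]
      exact Finset.mem_image_of_mem HF hi
    exact Finset.mem_of_mem_erase this
  have hsubU : ∀ X ∈ F, X ⊆ Finset.Icc 1 m := by
    intro X hX j hj
    rw [← hU]
    exact mem_famUniv.mpr ⟨X, hX, hj⟩
  -- Step 2 : |iota a| = |famAt F a|
  have hiotacard : (iota t HF a).card = (famAt F a).card := by
    have hsub : iota t HF a ⊆ Finset.Icc 1 t := Finset.filter_subset _ _
    have h4 := Finset.card_image_of_injOn (f := HF) (hinj.mono (Finset.coe_subset.mpr hsub))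
    have h3 : (iota t HF a).image HF = famAt F a := by
      ext X
      simp only [iota, famAt, Finset.mem_image, Finset.mem_filter]
      constructor
      · rintro ⟨i, ⟨hi, haHF⟩, rfl⟩
        exact ⟨hHFF i hi, haHF⟩
      · rintro ⟨hXF, haX⟩
        have hXim : X ∈ (Finset.Icc 1 t).image HF := by
          rw [himg]
          refine Finset.mem_erase.mpr ⟨?_, hXF⟩
          rintro rfl
          exact Finset.notMem_empty a haX
        obtain ⟨i, hi, rfl⟩ := Finset.mem_image.mp hXim
        exact ⟨i, ⟨hi, haX⟩, rfl⟩
    rw [h3] at h4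
    exact h4.symm
  -- Step 3 : |F| ≤ |dual|
  set e2 : Finset ℕ → Finset ℕ :=
    fun X => (Finset.Icc 1 t).filter (fun i => ¬ HF i ⊆ X) with he2
  have heD : ∀ X ∈ F, e2 X ∈ dualFam m t HF := by
    intro X hX
    rw [mem_dualFam]
    refine ⟨Finset.Icc 1 m \ X, Finset.sdiff_subset, ?_⟩
    apply Finset.filter_congr
    intro i hi
    constructor
    · intro hns
      obtain ⟨j, hjH, hjX⟩ := Finset.not_subset.mp hns
      exact ⟨j, Finset.mem_sdiff.mpr ⟨hsubU _ (hHFF i hi) hjH, hjX⟩, hjH⟩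
    · rintro ⟨j, hj, hjH⟩ hsub
      exact (Finset.mem_sdiff.mp hj).2 (hsub hjH)
  have hkey : ∀ X ∈ F, ∀ Y ∈ F, e2 X = e2 Y → X ⊆ Y := by
    intro X hX Y hY hXY
    rcases eq_or_ne X ∅ with rfl | hXne
    · exact Finset.empty_subset Y
    · have hXim : X ∈ (Finset.Icc 1 t).image HF := by
        rw [himg]
        exact Finset.mem_erase.mpr ⟨hXne, hX⟩
      obtain ⟨i0, hi0, hHFi0⟩ := Finset.mem_image.mp hXim
      have h1 : i0 ∉ e2 Y := by
        rw [← hXY, he2]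
        intro hmem
        exact (Finset.mem_filter.mp hmem).2 (by rw [hHFi0])
      have h2 : HF i0 ⊆ Y := by
        by_contra hcon
        exact h1 (by rw [he2]; exact Finset.mem_filter.mpr ⟨hi0, hcon⟩)
      rw [← hHFi0]
      exact h2
  have hinj2 : Set.InjOn e2 F := by
    intro X hX Y hY h
    exact Finset.Subset.antisymm (hkey X hX Y hY h) (hkey Y hY X hX h.symm)
  have hcards : F.card ≤ (dualFam m t HF).card := by
    rw [← Finset.card_image_of_injOn hinj2]
    apply Finset.card_le_card
    intro A hA
    obtain ⟨X, hX, rfl⟩ := Finset.mem_image.mp hA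
    exact heD X hX
  -- conclude
  refine ⟨a, by rw [hU]; exact ham, ?_⟩
  calc F.card ≤ (dualFam m t HF).card := hcards
    _ ≤ 2 * (iota t HF a).card := hle
    _ = 2 * (famAt F a).card := by rw [hiotacard]

theorem stmt15 :
    (∀ (n s : ℕ) (N : Finset (Finset ℕ)) (H : ℕ → Finset ℕ),
      normalized N → famUniv N = Finset.Icc 1 n → isIndexing (J N) s H →
      (∃ a ∈ famUniv (dualFam n s H),
        (dualFam n s H).card ≤ 2 * (famAt (dualFam n s H) a).card) →
      ∃ I ∈ J N, N.card ≤ 2 * I.card) ∧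
    (∀ (m t : ℕ) (F : Finset (Finset ℕ)) (HF : ℕ → Finset ℕ),
      independent F → unionClosed F → famUniv F = Finset.Icc 1 m → isIndexing F t HF →
      (∃ I ∈ J (dualFam m t HF), (dualFam m t HF).card ≤ 2 * I.card) →
      ∃ a ∈ famUniv F, F.card ≤ 2 * (famAt F a).card) := by
  exact ⟨fun n s N H hN hU hIdx hyp => part_i n s N H hN hU hIdx hyp,
    fun m t F HF hind huc hU hIdx hyp => part_ii m t F HF hind huc hU hIdx hyp⟩
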